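/- With R_P = ((1+ω)/2)I₄ + ((1-ω)/2)P for 4×4 Pauli tensor products P and ω = e^{iπ/4}, the identity R_{IX}·R_{IZ}·R_{IX}·R_{ZX}·R_{ZZ}·R_{ZX} = R_{ZX}·R_{IZ}·R_{IX}·R_{ZX}·R_{ZZ}·R_{IX} holds. -/

import Mathlib

/-!
Since `Id2` and `Z` are diagonal, every factor `R (P ⊗ₖ M)` is block diagonal with respect to
the first tensor factor: `R (Id2 ⊗ₖ M)` has blocks `R1 M, R1 M` and `R (Z ⊗ₖ M)` has blocks
`R1 M, R1 (-M)`, where `R1 M = a • 1 + b • M`. On the first block the two sides are the same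
word. On the second block, `R1 M * R1 (-M) = (a ^ 2 - b ^ 2) • 1` for every involution `M`, so
both sides collapse to `(a ^ 2 - b ^ 2) ^ 3 • 1`.
-/

open Matrix Kronecker

noncomputable def ω : ℂ := Complex.exp (Real.pi * Complex.I / 4)

def X : Matrix (Fin 2) (Fin 2) ℂ := !![0, 1; 1, 0]
def Y : Matrix (Fin 2) (Fin 2) ℂ := !![0, -Complex.I; Complex.I, 0]
def Z : Matrix (Fin 2) (Fin 2) ℂ := !![1, 0; 0, -1]
def Id2 : Matrix (Fin 2) (Fin 2) ℂ := 1

/-- The 45-degree Pauli rotation associated to a 4×4 matrix `P`. -/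
noncomputable def R (P : Matrix (Fin 2 × Fin 2) (Fin 2 × Fin 2) ℂ) :
    Matrix (Fin 2 × Fin 2) (Fin 2 × Fin 2) ℂ :=
  ((1 + ω) / 2) • (1 : Matrix (Fin 2 × Fin 2) (Fin 2 × Fin 2) ℂ) + ((1 - ω) / 2) • P

section Involution

variable {A K : Type*} [CommRing K] [Ring A] [Algebra K A]

theorem smul_one_add_smul_mul_smul_one_add_smul_neg {x : A} (hx : x * x = 1) (a b : K) :
    (a • 1 + b • x) * (a • 1 + b • -x) = (a ^ 2 - b ^ 2) • (1 : A) := by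
  simp only [add_mul, mul_add, smul_mul_smul, one_mul, mul_one, mul_neg, hx, smul_neg, sub_smul]
  rw [mul_comm b a]
  module

-- Both sides equal `c ^ 3 • 1`.
theorem mul_mul_mul_mul_mul_eq_of_mul_eq_smul_one {u u' v v' : A} {c : K}
    (hu : u * u' = c • 1) (hu' : u' * u = c • 1) (hv : v * v' = c • 1) :
    u * v * u * u' * v' * u' = u' * v * u * u' * v' * u := by
  simp only [mul_assoc, hu, hu', hv, mul_smul_comm, smul_mul_assoc, mul_one, smul_smul]

end Involution

section BlockDiagonal

variable {o m α : Type*} [Fintype o] [Fintype m] [DecidableEq o] [DecidableEq m]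

-- `Matrix.blockDiagonal` with the block index as the first coordinate, as in `diagonal c ⊗ₖ M`.
noncomputable def blockDiagonalLeft [Semiring α] :
    (o → Matrix m m α) →+* Matrix (o × m) (o × m) α :=
  (reindexRingEquiv α (Equiv.prodComm m o)).toRingHom.comp (blockDiagonalRingHom m o α)

theorem diagonal_kronecker_eq_blockDiagonalLeft [Semiring α] (c : o → α) (M : Matrix m m α) :
    diagonal c ⊗ₖ M = blockDiagonalLeft fun i => c i • M :=
  diagonal_kronecker c M

theorem blockDiagonalLeft_smul [CommSemiring α] (a : α) (d : o → Matrix m m α) :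
    blockDiagonalLeft (a • d) = a • blockDiagonalLeft d := by
  simp [blockDiagonalLeft, submatrix_smul]

theorem smul_one_add_smul_blockDiagonalLeft [CommSemiring α] (a b : α) (d : o → Matrix m m α) :
    a • 1 + b • blockDiagonalLeft d = blockDiagonalLeft fun i => a • 1 + b • d i := by
  change _ = blockDiagonalLeft (a • 1 + b • d)
  rw [map_add, blockDiagonalLeft_smul, blockDiagonalLeft_smul, map_one]

end BlockDiagonal

noncomputable def R1 (M : Matrix (Fin 2) (Fin 2) ℂ) : Matrix (Fin 2) (Fin 2) ℂ :=
  ((1 + ω) / 2) • 1 + ((1 - ω) / 2) • M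

theorem X_mul_X : X * X = 1 := by
  ext i j
  fin_cases i <;> fin_cases j <;> simp [X]

theorem Z_mul_Z : Z * Z = 1 := by
  ext i j
  fin_cases i <;> fin_cases j <;> simp [Z]

theorem Z_eq_diagonal : Z = diagonal ![1, -1] := by
  ext i j
  fin_cases i <;> fin_cases j <;> rfl

theorem R1_mul_R1_neg {M : Matrix (Fin 2) (Fin 2) ℂ} (hM : M * M = 1) :
    R1 M * R1 (-M) = (((1 + ω) / 2) ^ 2 - ((1 - ω) / 2) ^ 2) • 1 :=
  smul_one_add_smul_mul_smul_one_add_smul_neg hM _ _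

theorem R1_neg_mul_R1 {M : Matrix (Fin 2) (Fin 2) ℂ} (hM : M * M = 1) :
    R1 (-M) * R1 M = (((1 + ω) / 2) ^ 2 - ((1 - ω) / 2) ^ 2) • 1 := by
  simpa using R1_mul_R1_neg (M := -M) (by simpa using hM)

theorem R_diagonal_kronecker (c : Fin 2 → ℂ) (M : Matrix (Fin 2) (Fin 2) ℂ) :
    R (diagonal c ⊗ₖ M) = blockDiagonalLeft fun i => R1 (c i • M) := by
  rw [R, diagonal_kronecker_eq_blockDiagonalLeft, smul_one_add_smul_blockDiagonalLeft]
  rfl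

theorem R_Id2_kronecker (M : Matrix (Fin 2) (Fin 2) ℂ) :
    R (Id2 ⊗ₖ M) = blockDiagonalLeft fun _ => R1 M := by
  rw [Id2, ← diagonal_one, R_diagonal_kronecker]
  simp

theorem R_Z_kronecker (M : Matrix (Fin 2) (Fin 2) ℂ) :
    R (Z ⊗ₖ M) = blockDiagonalLeft ![R1 M, R1 (-M)] := by
  rw [Z_eq_diagonal, R_diagonal_kronecker]
  refine congrArg blockDiagonalLeft (funext fun i => ?_)
  fin_cases i <;> simp

theorem nonobvious_relation_two :
    R (Id2 ⊗ₖ X) * R (Id2 ⊗ₖ Z) * R (Id2 ⊗ₖ X) * R (Z ⊗ₖ X) * R (Z ⊗ₖ Z) * R (Z ⊗ₖ X) =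
      R (Z ⊗ₖ X) * R (Id2 ⊗ₖ Z) * R (Id2 ⊗ₖ X) * R (Z ⊗ₖ X) * R (Z ⊗ₖ Z) * R (Id2 ⊗ₖ X) := by
  simp only [R_Id2_kronecker, R_Z_kronecker, ← map_mul]
  refine congrArg blockDiagonalLeft (funext fun i => ?_)
  fin_cases i
  · simp
  · simpa using mul_mul_mul_mul_mul_eq_of_mul_eq_smul_one
      (R1_mul_R1_neg X_mul_X) (R1_neg_mul_R1 X_mul_X) (R1_mul_R1_neg Z_mul_Z)
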